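/- If the parameters m₁₁±, m₂₁±, m₂₂± are purely imaginary and θ is real, then the complex matrix R̂(θ) is unitary: R̂(θ)·R̂(θ)* = I₉, where * denotes conjugate transpose. -/

import Mathlib

/-! Up to a permutation of the basis, `R̂(θ)` is the direct sum of `1` and of 2×2 blocks
`[[p, m], [m, p]]` with `p, m = (u ± v)/2`, where `u = e^{m⁺θ}` and `v = e^{m⁻θ}` have modulus one.
Such a block is unitary: its rows have squared norm `(|u|² + |v|²)/2 = 1` and inner product
`(|u|² - |v|²)/2 = 0`. -/

open Matrix

/-- The 9×9 exotic braid matrix over ℂ with parameters `a₊, a₋, b₊, b₋, c₊, c₋`. -/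
noncomputable def Rhat9C (ap am bp bm cp cm : ℂ) : Matrix (Fin 9) (Fin 9) ℂ :=
  !![ap,0,0,0,0,0,0,0,am;
     0,bp,0,0,0,0,0,bm,0;
     0,0,ap,0,0,0,am,0,0;
     0,0,0,cp,0,cm,0,0,0;
     0,0,0,0,1,0,0,0,0;
     0,0,0,cm,0,cp,0,0,0;
     0,0,am,0,0,0,ap,0,0;
     0,bm,0,0,0,0,0,bp,0;
     am,0,0,0,0,0,0,0,ap]

/-- `a₊(θ) = (e^{m⁺θ} + e^{m⁻θ})/2` over ℂ. -/
noncomputable def aPC (mp mm : ℂ) (θ : ℝ) : ℂ :=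
  (Complex.exp (mp * θ) + Complex.exp (mm * θ)) / 2

/-- `a₋(θ) = (e^{m⁺θ} − e^{m⁻θ})/2` over ℂ. -/
noncomputable def aMC (mp mm : ℂ) (θ : ℝ) : ℂ :=
  (Complex.exp (mp * θ) - Complex.exp (mm * θ)) / 2

/-- The complex baxterized braid matrix `R̂(θ)`. -/
noncomputable def RhatThetaC (m11p m11m m21p m21m m22p m22m : ℂ) (θ : ℝ) :
    Matrix (Fin 9) (Fin 9) ℂ :=
  Rhat9C (aPC m11p m11m θ) (aMC m11p m11m θ) (aPC m21p m21m θ) (aMC m21p m21m θ)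
    (aPC m22p m22m θ) (aMC m22p m22m θ)

open ComplexConjugate

lemma Complex.conj_exp_mul_exp_of_re_eq_zero {z : ℂ} (hz : z.re = 0) :
    conj (Complex.exp z) * Complex.exp z = 1 := by
  have hconj : conj z = -z := Complex.ext (by simp [hz]) (by simp)
  rw [← Complex.exp_conj, hconj, ← Complex.exp_add, neg_add_cancel, Complex.exp_zero]

lemma half_sum_diff_orthonormal_of_conj_mul_self {u v : ℂ} (hu : conj u * u = 1) (hv : conj v * v = 1) :
    (u + v) / 2 * conj ((u + v) / 2) + (u - v) / 2 * conj ((u - v) / 2) = 1 ∧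
      (u + v) / 2 * conj ((u - v) / 2) + (u - v) / 2 * conj ((u + v) / 2) = 0 := by
  simp only [map_div₀, map_add, map_sub, Complex.conj_ofNat]
  constructor
  · linear_combination (hu + hv) / 2
  · linear_combination (hu - hv) / 2

lemma aPC_aMC_orthonormal_of_re_eq_zero {mp mm : ℂ} (hp : mp.re = 0) (hm : mm.re = 0) (θ : ℝ) :
    aPC mp mm θ * conj (aPC mp mm θ) + aMC mp mm θ * conj (aMC mp mm θ) = 1 ∧
      aPC mp mm θ * conj (aMC mp mm θ) + aMC mp mm θ * conj (aPC mp mm θ) = 0 := by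
  have hre {m : ℂ} (h : m.re = 0) : (m * θ).re = 0 := by simp [h]
  exact half_sum_diff_orthonormal_of_conj_mul_self (Complex.conj_exp_mul_exp_of_re_eq_zero (hre hp))
    (Complex.conj_exp_mul_exp_of_re_eq_zero (hre hm))

lemma Rhat9C_mul_conjTranspose_eq_one {ap am bp bm cp cm : ℂ}
    (ha : ap * conj ap + am * conj am = 1) (ha' : ap * conj am + am * conj ap = 0)
    (hb : bp * conj bp + bm * conj bm = 1) (hb' : bp * conj bm + bm * conj bp = 0)
    (hc : cp * conj cp + cm * conj cm = 1) (hc' : cp * conj cm + cm * conj cp = 0) :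
    Rhat9C ap am bp bm cp cm * (Rhat9C ap am bp bm cp cm)ᴴ = 1 := by
  ext i j
  fin_cases i <;> fin_cases j <;>
    simp only [Rhat9C, mul_apply, conjTranspose_apply, one_apply, of_apply, RCLike.star_def,
      Fin.sum_univ_succ, Finset.univ_unique, Finset.sum_const,
      Finset.card_singleton, one_smul, cons_val, cons_val', cons_val_zero, cons_val_one,
      cons_val_succ, cons_val_fin_one, Fin.default_eq_zero, Fin.isValue, Fin.mk_one, Fin.zero_eta,
      Fin.reduceEq, Fin.reduceFinMk, one_ne_zero, zero_ne_one, ↓reduceIte, map_zero, map_one,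
      mul_zero, zero_mul, mul_one, add_zero, zero_add] <;>
    first
      | linear_combination ha | linear_combination ha' | linear_combination hb
      | linear_combination hb' | linear_combination hc | linear_combination hc'

/-- If the parameters `m₁₁±, m₂₁±, m₂₂±` are purely imaginary and θ is real,
then `R̂(θ)` is unitary: `R̂(θ)·R̂(θ)* = I₉`. -/
theorem stmt4 (m11p m11m m21p m21m m22p m22m : ℂ)
    (h11p : m11p.re = 0) (h11m : m11m.re = 0)
    (h21p : m21p.re = 0) (h21m : m21m.re = 0)
    (h22p : m22p.re = 0) (h22m : m22m.re = 0) (θ : ℝ) :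
    RhatThetaC m11p m11m m21p m21m m22p m22m θ *
      (RhatThetaC m11p m11m m21p m21m m22p m22m θ)ᴴ = 1 := by
  obtain ⟨ha, ha'⟩ := aPC_aMC_orthonormal_of_re_eq_zero h11p h11m θ
  obtain ⟨hb, hb'⟩ := aPC_aMC_orthonormal_of_re_eq_zero h21p h21m θ
  obtain ⟨hc, hc'⟩ := aPC_aMC_orthonormal_of_re_eq_zero h22p h22m θ
  exact Rhat9C_mul_conjTranspose_eq_one ha ha' hb hb' hc hc'
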